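/- arXiv:1901.05660 — 3 statements merged into one kernel-verified Lean document; each statement's English description precedes it below -/
import Mathlib

section
/- Let ε ∈ (0, 1/2), let (Ω, F, P, (τ_x)_{x∈ℝ}) be an ergodic measure-preserving flow, and let A ∈ F with P(A) > 1 − ε. Then P-almost surely, for every δ > 2ε/(1−2ε) and for all sufficiently large t > 0, there exists s ∈ (t, (1+δ)t) such that τ_s ω ∈ A. -/
open MeasureTheory Filter

/-!
The occupation time `|{s ∈ (0, n] : τ_s ω ∈ A}|` is the Birkhoff sum, under the time-one map, of
`ω ↦ |{s ∈ (0, 1] : τ_s ω ∈ A}|`, a function with mean `P A`. Its lower density (liminf of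
occupation time over `n`) is invariant under the flow, hence a.e. constant by ergodicity. If it
were `< c` a.e. for some `c < P A`, almost every orbit would have an initial block of average
`≤ c`, and a Katznelson–Weiss covering of orbits by such blocks would give `P A ≤ c`. So a.e. the
lower density is `≥ 1 - ε`. An orbit avoiding `A` during `(t, (1 + δ) t)` has density at most
about `1 / (1 + δ)` at time `(1 + δ) t`, and `1 / (1 + δ) < 1 - ε` once `δ > ε / (1 - ε)`.
-/

section BirkhoffSum

variable {α : Type*} {T : α → α} {f : α → ℝ}

theorem birkhoffSum_nonneg (hf : ∀ x, 0 ≤ f x) (n : ℕ) (x : α) : 0 ≤ birkhoffSum T f n x :=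
  Finset.sum_nonneg fun _ _ => hf _

theorem birkhoffSum_le_of_le_one (hf : ∀ x, f x ≤ 1) (n : ℕ) (x : α) :
    birkhoffSum T f n x ≤ n := by
  simpa [birkhoffSum] using Finset.sum_le_card_nsmul (Finset.range n) _ 1 fun k _ => hf (T^[k] x)

/-- Katznelson–Weiss covering: cut the orbit greedily into blocks of length `≤ M` with average
`≤ c`, started at points outside `B`, and single steps at points of `B`; only the last,
incomplete block is not accounted for. -/
theorem birkhoffSum_le_of_forall_notMem {B : Set α} {c : ℝ} {M : ℕ}
    (hf : ∀ x, f x ≤ 1) (hc : 0 ≤ c)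
    (hB : ∀ x ∉ B, ∃ n, 1 ≤ n ∧ n ≤ M ∧ birkhoffSum T f n x ≤ c * n) (N : ℕ) (x : α) :
    birkhoffSum T f N x ≤ c * N + birkhoffSum T (B.indicator 1) N x + M := by
  induction N using Nat.strong_induction_on generalizing x with
  | _ N ih =>
  have hind : ∀ m y, (0 : ℝ) ≤ birkhoffSum T (B.indicator 1) m y :=
    birkhoffSum_nonneg fun y => Set.indicator_nonneg (fun _ _ => zero_le_one) y
  by_cases hx : x ∈ B
  · cases N with
    | zero => simp
    | succ N =>
      have hfx : f x ≤ B.indicator 1 x := by simpa [Set.indicator_of_mem hx] using hf x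
      have := ih N N.lt_succ_self (T x)
      rw [birkhoffSum_succ', birkhoffSum_succ']
      push_cast
      nlinarith
  · obtain ⟨n, hn1, hnM, hn⟩ := hB x hx
    rcases le_or_gt N n with hNn | hnN
    · have : (N : ℝ) ≤ M := by exact_mod_cast hNn.trans hnM
      have := birkhoffSum_le_of_le_one (T := T) hf N x
      nlinarith [hind N x]
    · obtain ⟨m, rfl⟩ := Nat.exists_eq_add_of_le hnN.le
      have := ih m (by omega) (T^[n] x)
      rw [birkhoffSum_add, birkhoffSum_add]
      push_cast at this ⊢
      nlinarith [hind n x]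

end BirkhoffSum

namespace MeasureTheory.MeasurePreserving

variable {α : Type*} [MeasurableSpace α] {μ : Measure α} {T : α → α} {f : α → ℝ}

theorem integrable_birkhoffSum (hT : MeasurePreserving T μ μ) (hf : Integrable f μ) (n : ℕ) :
    Integrable (birkhoffSum T f n) μ := by
  unfold birkhoffSum
  exact integrable_finsetSum _ fun k _ => (hT.iterate k).integrable_comp_of_integrable hf

theorem integral_birkhoffSum (hT : MeasurePreserving T μ μ) (hf : Integrable f μ) (n : ℕ) :
    ∫ x, birkhoffSum T f n x ∂μ = n * ∫ x, f x ∂μ := by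
  have hint : ∀ k, Integrable (fun x => f (T^[k] x)) μ := fun k =>
    (hT.iterate k).integrable_comp_of_integrable hf
  have hcomp : ∀ k, ∫ x, f (T^[k] x) ∂μ = ∫ x, f x ∂μ := fun k => by
    rw [← (hT.iterate k).map_eq] at hf ⊢
    rw [integral_map (hT.iterate k).aemeasurable hf.aestronglyMeasurable, (hT.iterate k).map_eq]
  simp only [birkhoffSum]
  rw [integral_finsetSum _ fun k _ => hint k]
  simp [hcomp]

theorem integral_le_of_forall_notMem [IsProbabilityMeasure μ] {B : Set α} {c : ℝ} {M N : ℕ}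
    (hT : MeasurePreserving T μ μ) (hf : Integrable f μ) (hf1 : ∀ x, f x ≤ 1) (hc : 0 ≤ c)
    (hBm : MeasurableSet B) (hB : ∀ x ∉ B, ∃ n, 1 ≤ n ∧ n ≤ M ∧ birkhoffSum T f n x ≤ c * n)
    (hN : 1 ≤ N) : ∫ x, f x ∂μ ≤ c + μ.real B + M / N := by
  have hind : Integrable (B.indicator (1 : α → ℝ)) μ := (integrable_const 1).indicator hBm
  have hsum := hT.integrable_birkhoffSum hind N
  have key : (N : ℝ) * ∫ x, f x ∂μ ≤ c * N + N * μ.real B + M :=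
    calc (N : ℝ) * ∫ x, f x ∂μ = ∫ x, birkhoffSum T f N x ∂μ :=
          (hT.integral_birkhoffSum hf N).symm
      _ ≤ ∫ x, (c * N + birkhoffSum T (B.indicator 1) N x + M) ∂μ :=
          integral_mono (hT.integrable_birkhoffSum hf N)
            (((integrable_const _).add hsum).add (integrable_const _))
            (birkhoffSum_le_of_forall_notMem hf1 hc hB N)
      _ = c * N + N * μ.real B + M := by
          rw [integral_add (f := fun x => c * N + birkhoffSum T (B.indicator 1) N x)
            ((integrable_const _).add hsum) (integrable_const _),
            integral_add (integrable_const _) hsum, hT.integral_birkhoffSum hind,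
            integral_indicator_one hBm]
          simp
  rw [← sub_le_iff_le_add', le_div_iff₀ (by exact_mod_cast hN)]
  linarith

theorem integral_le_of_ae_exists_birkhoffSum_le [IsProbabilityMeasure μ] {c : ℝ}
    (hT : MeasurePreserving T μ μ) (hf : Measurable f) (hf0 : ∀ x, 0 ≤ f x)
    (hf1 : ∀ x, f x ≤ 1) (h : ∀ᵐ x ∂μ, ∃ n, 1 ≤ n ∧ birkhoffSum T f n x ≤ c * n) :
    ∫ x, f x ∂μ ≤ c := by
  rcases lt_or_ge c 0 with hc | hc
  · obtain ⟨x, n, hn, hx⟩ := h.exists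
    have : c * n < 0 := mul_neg_of_neg_of_pos hc (by exact_mod_cast hn)
    linarith [birkhoffSum_nonneg (T := T) hf0 n x]
  set Bad : ℕ → Set α := fun M => {x | ∀ n, 1 ≤ n → n ≤ M → c * n < birkhoffSum T f n x}
  have hBad : ∀ M, MeasurableSet (Bad M) := fun M => by
    simp only [Bad, Set.ofPred_forall]
    exact .iInter fun n => .iInter fun _ => .iInter fun _ => measurableSet_lt measurable_const
      (Finset.measurable_sum _ fun k _ => hf.comp (hT.measurable.iterate k))
  have hfint : Integrable f μ :=
    .of_bound hf.aestronglyMeasurable 1 (ae_of_all _ fun x => by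
      rw [Real.norm_eq_abs, abs_of_nonneg (hf0 x)]; exact hf1 x)
  have hlimN : ∀ M, ∫ x, f x ∂μ ≤ c + μ.real (Bad M) := fun M => by
    have := (tendsto_const_div_atTop_nhds_zero_nat (M : ℝ)).const_add (c + μ.real (Bad M))
    rw [add_zero] at this
    exact ge_of_tendsto this ((eventually_ge_atTop 1).mono fun N hN =>
      hT.integral_le_of_forall_notMem hfint hf1 hc (hBad M)
        (fun x hx => by simpa [Bad] using hx) hN)
  have hnull : μ (⋂ M, Bad M) = 0 :=
    measure_mono_null (fun x hx ⟨n, hn, hle⟩ => (Set.mem_iInter.1 hx n n hn le_rfl).not_ge hle :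
      (⋂ M, Bad M) ⊆ {x | ¬ ∃ n, 1 ≤ n ∧ birkhoffSum T f n x ≤ c * n}) (ae_iff.1 h)
  have hlimM : Tendsto (fun M => μ.real (Bad M)) atTop (nhds 0) := by
    have := tendsto_measure_iInter_atTop (fun M => (hBad M).nullMeasurableSet)
      (fun M M' hMM' x hx n hn hnM' => hx n hn (hnM'.trans hMM')) ⟨0, measure_ne_top μ _⟩
    rw [hnull] at this
    exact (ENNReal.tendsto_toReal ENNReal.zero_ne_top).comp this
  have := hlimM.const_add c
  rw [add_zero] at this
  exact ge_of_tendsto' this hlimN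

end MeasureTheory.MeasurePreserving

theorem Filter.liminf_le_liminf_of_tendsto_sub {ι : Type*} {f : Filter ι} [NeBot f]
    {u v : ι → ℝ} (h : Tendsto (u - v) f (nhds 0)) (hv : IsBoundedUnder (· ≥ ·) f v)
    (hv' : IsCoboundedUnder (· ≥ ·) f v) : liminf u f ≤ liminf v f := by
  have := liminf_add_le h.isBoundedUnder_ge h.isBoundedUnder_le hv hv'
  rwa [sub_add_cancel, h.limsup_eq, zero_add] at this

noncomputable def occupationTime {Ω : Type*} (τ : ℝ → Ω → Ω) (A : Set Ω) (ω : Ω) (a b : ℝ) :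
    ℝ :=
  volume.real ((fun s => τ s ω) ⁻¹' A ∩ Set.Ioc a b)

noncomputable def lowerOccupationDensity {Ω : Type*} (τ : ℝ → Ω → Ω) (A : Set Ω) (ω : Ω) : ℝ :=
  liminf (fun n : ℕ => occupationTime τ A ω 0 n / n) atTop

section Occupation

variable {Ω : Type*} {τ : ℝ → Ω → Ω} {A : Set Ω}

theorem occupationTime_le_sub (ω : Ω) {a b : ℝ} (hab : a ≤ b) :
    occupationTime τ A ω a b ≤ b - a := by
  rw [← Real.volume_real_Ioc_of_le hab]
  exact measureReal_mono Set.inter_subset_right measure_Ioc_lt_top.ne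

theorem occupationTime_le_add_abs (ω : Ω) (a b a' b' : ℝ) :
    occupationTime τ A ω a b ≤ occupationTime τ A ω a' b' + |a - a'| + |b - b'| := by
  have hsub : (fun s => τ s ω) ⁻¹' A ∩ Set.Ioc a b ⊆
      ((fun s => τ s ω) ⁻¹' A ∩ Set.Ioc a' b' ∪ Set.Ioc a a') ∪ Set.Ioc b' b := by
    rintro s ⟨hsA, hs⟩
    by_cases h₁ : s ≤ a'
    · exact .inl (.inr ⟨hs.1, h₁⟩)
    by_cases h₂ : s ≤ b'
    · exact .inl (.inl ⟨hsA, lt_of_not_ge h₁, h₂⟩)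
    · exact .inr ⟨lt_of_not_ge h₂, hs.2⟩
  have hfin : volume ((fun s => τ s ω) ⁻¹' A ∩ Set.Ioc a' b' ∪ Set.Ioc a a' ∪ Set.Ioc b' b) ≠ ⊤ :=
    measure_union_ne_top (measure_union_ne_top
      (measure_inter_ne_top_of_right_ne_top measure_Ioc_lt_top.ne) measure_Ioc_lt_top.ne)
      measure_Ioc_lt_top.ne
  calc occupationTime τ A ω a b
      ≤ volume.real ((fun s => τ s ω) ⁻¹' A ∩ Set.Ioc a' b' ∪ Set.Ioc a a')
        + volume.real (Set.Ioc b' b) :=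
        (measureReal_mono hsub hfin).trans (measureReal_union_le _ _)
    _ ≤ occupationTime τ A ω a' b' + volume.real (Set.Ioc a a') + volume.real (Set.Ioc b' b) := by
        gcongr
        exact measureReal_union_le _ _
    _ ≤ occupationTime τ A ω a' b' + |a - a'| + |b - b'| := by
        rw [Real.volume_real_Ioc, Real.volume_real_Ioc]
        gcongr <;> apply max_le <;> first
          | positivity
          | linarith [le_abs_self (a - a'), neg_abs_le (a - a'), le_abs_self (b - b'),
              neg_abs_le (b - b')]

theorem occupationTime_flow (hflow : ∀ s t : ℝ, τ (s + t) = τ s ∘ τ t) (r : ℝ) (ω : Ω)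
    (a b : ℝ) : occupationTime τ A (τ r ω) a b = occupationTime τ A ω (a + r) (b + r) := by
  have : (fun s => τ s (τ r ω)) ⁻¹' A ∩ Set.Ioc a b
      = (· + r) ⁻¹' ((fun s => τ s ω) ⁻¹' A ∩ Set.Ioc (a + r) (b + r)) := by
    ext s
    simp [hflow]
  rw [occupationTime, occupationTime, this, measureReal_def, measureReal_def,
    measure_preimage_add_right]

theorem occupationTime_div_nonneg (ω : Ω) (n : ℕ) : 0 ≤ occupationTime τ A ω 0 n / n :=
  div_nonneg measureReal_nonneg n.cast_nonneg

theorem occupationTime_div_le_one (ω : Ω) (n : ℕ) : occupationTime τ A ω 0 n / n ≤ 1 :=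
  div_le_one_of_le₀ (by simpa using occupationTime_le_sub ω n.cast_nonneg) n.cast_nonneg

theorem lowerOccupationDensity_flow (hflow : ∀ s t : ℝ, τ (s + t) = τ s ∘ τ t) (r : ℝ)
    (ω : Ω) : lowerOccupationDensity τ A (τ r ω) = lowerOccupationDensity τ A ω := by
  have hbdd : ∀ ω, IsBoundedUnder (· ≥ ·) atTop fun n : ℕ => occupationTime τ A ω 0 n / n :=
    fun ω => isBoundedUnder_of ⟨0, occupationTime_div_nonneg ω⟩
  have hcobdd : ∀ ω, IsCoboundedUnder (· ≥ ·) atTop fun n : ℕ => occupationTime τ A ω 0 n / n :=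
    fun ω => isCoboundedUnder_ge_of_le atTop (occupationTime_div_le_one ω)
  have hdiff : ∀ n : ℕ,
      |occupationTime τ A (τ r ω) 0 n - occupationTime τ A ω 0 n| ≤ 2 * |r| := by
    intro n
    rw [occupationTime_flow hflow, zero_add, abs_sub_le_iff]
    have h₁ := occupationTime_le_add_abs (τ := τ) (A := A) ω r (n + r) 0 n
    have h₂ := occupationTime_le_add_abs (τ := τ) (A := A) ω 0 n r (n + r)
    simp only [sub_zero, add_sub_cancel_left, zero_sub, abs_neg, sub_add_cancel_left] at h₁ h₂
    constructor <;> linarith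
  have hlim : Tendsto (fun n : ℕ => occupationTime τ A (τ r ω) 0 n / n
      - occupationTime τ A ω 0 n / n) atTop (nhds 0) := by
    refine squeeze_zero_norm (fun n => ?_) (tendsto_const_div_atTop_nhds_zero_nat (2 * |r|))
    rw [← sub_div, norm_div, Real.norm_eq_abs, Real.norm_natCast]
    exact div_le_div_of_nonneg_right (hdiff n) n.cast_nonneg
  refine le_antisymm (liminf_le_liminf_of_tendsto_sub hlim (hbdd ω) (hcobdd ω))
    (liminf_le_liminf_of_tendsto_sub ?_ (hbdd _) (hcobdd _))
  convert hlim.neg using 1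
  · ext n; simp
  · simp

variable [MeasurableSpace Ω]

theorem measurableSet_preimage_orbit (hmeas : Measurable fun p : ℝ × Ω => τ p.1 p.2)
    (hA : MeasurableSet A) (ω : Ω) : MeasurableSet ((fun s => τ s ω) ⁻¹' A) :=
  hmeas.comp (measurable_id.prodMk measurable_const) hA

theorem occupationTime_add (hmeas : Measurable fun p : ℝ × Ω => τ p.1 p.2)
    (hA : MeasurableSet A) (ω : Ω) {a b c : ℝ} (hab : a ≤ b) (hbc : b ≤ c) :
    occupationTime τ A ω a c = occupationTime τ A ω a b + occupationTime τ A ω b c := by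
  rw [occupationTime, ← Set.Ioc_union_Ioc_eq_Ioc hab hbc, Set.inter_union_distrib_left]
  exact measureReal_union ((Set.Ioc_disjoint_Ioc_of_le le_rfl).mono Set.inter_subset_right
    Set.inter_subset_right) ((measurableSet_preimage_orbit hmeas hA ω).inter measurableSet_Ioc)
    (measure_inter_ne_top_of_right_ne_top measure_Ioc_lt_top.ne)
    (measure_inter_ne_top_of_right_ne_top measure_Ioc_lt_top.ne)

theorem birkhoffSum_occupationTime (hflow : ∀ s t : ℝ, τ (s + t) = τ s ∘ τ t)
    (hmeas : Measurable fun p : ℝ × Ω => τ p.1 p.2) (hA : MeasurableSet A) (n : ℕ) (ω : Ω) :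
    birkhoffSum (τ 1) (fun ω => occupationTime τ A ω 0 1) n ω = occupationTime τ A ω 0 n := by
  induction n generalizing ω with
  | zero => simp [occupationTime]
  | succ n ih =>
    rw [birkhoffSum_succ', ih, occupationTime_flow hflow, zero_add, Nat.cast_succ,
      add_comm (n : ℝ), ← occupationTime_add hmeas hA ω zero_le_one
        (by linarith [n.cast_nonneg (α := ℝ)])]

theorem occupationTime_eq_toReal_restrict (hmeas : Measurable fun p : ℝ × Ω => τ p.1 p.2)
    (hA : MeasurableSet A) (ω : Ω) (a b : ℝ) :
    occupationTime τ A ω a b = (volume.restrict (Set.Ioc a b)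
      (Prod.mk ω ⁻¹' {p : Ω × ℝ | τ p.2 p.1 ∈ A})).toReal := by
  have hs : MeasurableSet (Prod.mk ω ⁻¹' {p : Ω × ℝ | τ p.2 p.1 ∈ A}) :=
    measurableSet_preimage_orbit hmeas hA ω
  rw [Measure.restrict_apply hs]
  rfl

theorem measurable_occupationTime (hmeas : Measurable fun p : ℝ × Ω => τ p.1 p.2)
    (hA : MeasurableSet A) (a b : ℝ) : Measurable fun ω => occupationTime τ A ω a b := by
  have hE : MeasurableSet {p : Ω × ℝ | τ p.2 p.1 ∈ A} := (hmeas.comp measurable_swap) hA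
  simp_rw [occupationTime_eq_toReal_restrict hmeas hA]
  exact (measurable_measure_prodMk_left hE).ennreal_toReal

theorem integral_occupationTime (P : Measure Ω) [IsProbabilityMeasure P]
    (hmeas : Measurable fun p : ℝ × Ω => τ p.1 p.2) (hmp : ∀ s, MeasurePreserving (τ s) P P)
    (hA : MeasurableSet A) {a b : ℝ} (hab : a ≤ b) :
    ∫ ω, occupationTime τ A ω a b ∂P = (b - a) * P.real A := by
  have hE : MeasurableSet {p : Ω × ℝ | τ p.2 p.1 ∈ A} := (hmeas.comp measurable_swap) hA
  simp_rw [occupationTime_eq_toReal_restrict hmeas hA]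
  rw [integral_toReal (measurable_measure_prodMk_left hE).aemeasurable
      (ae_of_all _ fun ω => (measure_mono (Set.subset_univ _)).trans_lt (by simp)),
    ← Measure.prod_apply hE, Measure.prod_apply_symm hE]
  have hslice : ∀ s, P {ω | τ s ω ∈ A} = P A := fun s =>
    (hmp s).measure_preimage hA.nullMeasurableSet
  simp [hslice, measureReal_def, hab, mul_comm]

theorem measurable_lowerOccupationDensity (hmeas : Measurable fun p : ℝ × Ω => τ p.1 p.2)
    (hA : MeasurableSet A) : Measurable (lowerOccupationDensity τ A) :=
  .liminf fun n => (measurable_occupationTime hmeas hA 0 n).div_const _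

theorem ae_le_lowerOccupationDensity (P : Measure Ω) [IsProbabilityMeasure P]
    (hmeas : Measurable fun p : ℝ × Ω => τ p.1 p.2) (hmp : ∀ s, MeasurePreserving (τ s) P P)
    (hflow : ∀ s t : ℝ, τ (s + t) = τ s ∘ τ t)
    (herg : ∀ A : Set Ω, MeasurableSet A → (∀ s : ℝ, τ s ⁻¹' A = A) → P A = 0 ∨ P A = 1)
    (hA : MeasurableSet A) {c : ℝ} (hc : c < P.real A) :
    ∀ᵐ ω ∂P, c ≤ lowerOccupationDensity τ A ω := by
  set D := {ω | lowerOccupationDensity τ A ω < c}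
  have hD : MeasurableSet D :=
    measurableSet_lt (measurable_lowerOccupationDensity hmeas hA) measurable_const
  have hinv : ∀ s, τ s ⁻¹' D = D := fun s => by
    ext ω
    simp [D, lowerOccupationDensity_flow hflow]
  suffices P D ≠ 1 by
    filter_upwards [measure_eq_zero_iff_ae_notMem.1 ((herg D hD hinv).resolve_right this)]
      with ω hω using not_lt.1 hω
  intro hD1
  have hae : ∀ᵐ ω ∂P, ω ∈ D := by
    rwa [ae_mem_iff_measure_eq hD.nullMeasurableSet, measure_univ]
  have hshort : ∀ᵐ ω ∂P, ∃ n, 1 ≤ n ∧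
      birkhoffSum (τ 1) (fun ω => occupationTime τ A ω 0 1) n ω ≤ c * n := by
    filter_upwards [hae] with ω hω
    obtain ⟨n, hn, hn1⟩ := ((frequently_lt_of_liminf_lt
      (isCoboundedUnder_ge_of_le atTop (occupationTime_div_le_one ω)) hω).and_eventually
      (eventually_ge_atTop 1)).exists
    rw [div_lt_iff₀ (by exact_mod_cast hn1)] at hn
    exact ⟨n, hn1, (birkhoffSum_occupationTime hflow hmeas hA n ω).trans_le hn.le⟩
  have hmean := (hmp 1).integral_le_of_ae_exists_birkhoffSum_le
    (measurable_occupationTime hmeas hA 0 1) (fun ω => measureReal_nonneg)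
    (fun ω => by simpa using occupationTime_le_sub (τ := τ) (A := A) ω zero_le_one) hshort
  rw [integral_occupationTime P hmeas hmp hA zero_le_one, sub_zero, one_mul] at hmean
  linarith

end Occupation

theorem exists_mem_Ioo_of_inv_lt_liminf {S : Set ℝ} {δ : ℝ} (hδ : 0 < δ)
    (h : (1 + δ)⁻¹ < liminf (fun n : ℕ => volume.real (S ∩ Set.Ioc 0 n) / n) atTop) :
    ∃ t₀, ∀ t > t₀, ∃ s ∈ Set.Ioo t ((1 + δ) * t), s ∈ S := by
  obtain ⟨c, hc₁, hc₂⟩ := exists_between h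
  obtain ⟨N, hN⟩ := eventually_atTop.1 (eventually_lt_of_lt_liminf hc₂
    (isBoundedUnder_of ⟨0, fun n => div_nonneg measureReal_nonneg n.cast_nonneg⟩))
  have hcδ : 0 < c * (1 + δ) - 1 := by
    rw [inv_lt_iff_one_lt_mul₀ (by linarith)] at hc₁
    linarith
  refine ⟨max (N + 1) (c / (c * (1 + δ) - 1)), fun t ht => ?_⟩
  rw [gt_iff_lt, max_lt_iff, div_lt_iff₀ hcδ] at ht
  obtain ⟨htN, htc⟩ := ht
  by_contra! hgap
  set n := ⌊(1 + δ) * t⌋₊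
  have hn : (1 + δ) * t - 1 < n := by
    have := Nat.lt_floor_add_one ((1 + δ) * t)
    linarith
  have hnt : (n : ℝ) ≤ (1 + δ) * t := Nat.floor_le (by nlinarith)
  have hNn : N ≤ n := by
    have : (N : ℝ) < n := by nlinarith
    exact_mod_cast this.le
  have hvol : volume.real (S ∩ Set.Ioc 0 n) ≤ t := by
    have hsub : S ∩ Set.Ioc 0 n ⊆ Set.Ioc 0 t ∪ {(1 + δ) * t} := by
      rintro s ⟨hsS, hs0, hsn⟩
      by_cases hst : s ≤ t
      · exact .inl ⟨hs0, hst⟩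
      · exact .inr (le_antisymm (hsn.trans hnt)
          (not_lt.1 fun hlt => hgap s ⟨lt_of_not_ge hst, hlt⟩ hsS))
    calc volume.real (S ∩ Set.Ioc 0 n)
        ≤ volume.real (Set.Ioc 0 t) + volume.real {(1 + δ) * t} :=
          (measureReal_mono hsub (measure_union_ne_top measure_Ioc_lt_top.ne (by simp))).trans
            (measureReal_union_le _ _)
      _ = t := by
          simp [Real.volume_real_Ioc_of_le (by linarith : (0 : ℝ) ≤ t), measureReal_def]
  have hcn := hN n hNn
  rw [lt_div_iff₀ (by nlinarith)] at hcn
  nlinarith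

/-- Ergodic hitting lemma along a measure-preserving flow. -/
theorem stmt_0 {Ω : Type*} [MeasurableSpace Ω] (P : Measure Ω) [IsProbabilityMeasure P]
    (τ : ℝ → Ω → Ω)
    (hmeas : Measurable fun p : ℝ × Ω => τ p.1 p.2)
    (hmp : ∀ s : ℝ, MeasurePreserving (τ s) P P)
    (hflow : ∀ s t : ℝ, τ (s + t) = τ s ∘ τ t)
    (herg : ∀ A : Set Ω, MeasurableSet A → (∀ s : ℝ, τ s ⁻¹' A = A) → P A = 0 ∨ P A = 1)
    (ε : ℝ) (hε : ε ∈ Set.Ioo (0 : ℝ) (1/2))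
    (A : Set Ω) (hA : MeasurableSet A) (hPA : P A > ENNReal.ofReal (1 - ε)) :
    ∀ᵐ ω ∂P, ∀ δ > 2 * ε / (1 - 2 * ε), ∃ t₀ : ℝ, ∀ t > t₀,
      ∃ s ∈ Set.Ioo t ((1 + δ) * t), τ s ω ∈ A := by
  obtain ⟨hε₀, hε₁⟩ := hε
  have hPA' : 1 - ε < P.real A :=
    (ENNReal.ofReal_lt_iff_lt_toReal (by linarith) (measure_ne_top P A)).1 hPA
  filter_upwards [ae_le_lowerOccupationDensity P hmeas hmp hflow herg hA hPA'] with ω hω δ hδ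
  rw [gt_iff_lt, div_lt_iff₀ (by linarith)] at hδ
  have hδ₀ : 0 < δ := by nlinarith
  have hinv : (1 + δ)⁻¹ < 1 - ε := by
    rw [inv_lt_iff_one_lt_mul₀ (by linarith)]
    nlinarith
  exact exists_mem_Ioo_of_inv_lt_liminf (S := (fun s => τ s ω) ⁻¹' A) hδ₀ (hinv.trans_le hω)
end

section
/- Let W : ℝ^d → [0,∞) satisfy W(x) ≤ C(|x|^{−γ} ∧ 1) for some γ > d and C > 0. Then there is a constant C' > 0 such that for all x ∈ ℝ^d with |x| > 2, ∫_{ℝ^d} W(u) W(x − u) du ≤ C' |x|^{−γ}. -/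
open MeasureTheory

/-- Convolution bound: if `0 ≤ W(x) ≤ C(|x|^{−γ} ∧ 1)` with `γ > d`, then
`∫ W(u)W(x−u) du ≤ C'|x|^{−γ}` for `|x| > 2`. -/
theorem stmt_13 (d : ℕ) (hd : 1 ≤ d) (γ C : ℝ) (hγ : γ > d) (hC : 0 < C)
    (W : EuclideanSpace ℝ (Fin d) → ℝ)
    (hmeas : Measurable W)
    (hnonneg : ∀ x, 0 ≤ W x)
    (hW : ∀ x, W x ≤ C * min (‖x‖ ^ (-γ)) 1) :
    ∃ C' > (0:ℝ), ∀ x : EuclideanSpace ℝ (Fin d), ‖x‖ > 2 →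
      ∫ u, W u * W (x - u) ≤ C' * ‖x‖ ^ (-γ) := by
  have hγ0 : (0:ℝ) < γ := lt_of_le_of_lt (by positivity) hγ
  -- W is integrable
  have hWint : Integrable W := by
    have hint : Integrable (fun u : EuclideanSpace ℝ (Fin d) =>
        C * (2 ^ γ * (1 + ‖u‖) ^ (-γ))) := by
      refine (Integrable.const_mul ?_ _).const_mul C
      exact integrable_one_add_norm (by simpa using hγ)
    refine hint.mono' hmeas.aestronglyMeasurable (Filter.Eventually.of_forall fun u => ?_)
    rw [Real.norm_of_nonneg (hnonneg u)]
    refine (hW u).trans ?_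
    gcongr C * ?_ -- reduce to min ≤ 2^γ * (1+‖u‖)^(-γ)
    have h2 : 2 ^ γ * (1 + ‖u‖) ^ (-γ) = ((1 + ‖u‖) / 2) ^ (-γ) := by
      rw [Real.div_rpow (by positivity) (by norm_num),
        Real.rpow_neg (by norm_num : (0:ℝ) ≤ 2), div_eq_mul_inv, inv_inv, mul_comm]
    rw [h2]
    rcases le_or_gt (‖u‖) 1 with h | h
    · calc min (‖u‖ ^ (-γ)) 1 ≤ 1 := min_le_right _ _
        _ ≤ ((1 + ‖u‖) / 2) ^ (-γ) :=
            Real.one_le_rpow_of_pos_of_le_one_of_nonpos (by positivity) (by linarith)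
              (by linarith)
    · calc min (‖u‖ ^ (-γ)) 1 ≤ ‖u‖ ^ (-γ) := min_le_left _ _
        _ ≤ ((1 + ‖u‖) / 2) ^ (-γ) :=
            Real.rpow_le_rpow_of_nonpos (by positivity) (by linarith) (by linarith)
  set I : ℝ := ∫ u, W u with hI
  have hI0 : 0 ≤ I := integral_nonneg hnonneg
  refine ⟨C * 2 ^ γ * (2 * I + 1), by positivity, fun x hx => ?_⟩
  have hxpos : (0:ℝ) < ‖x‖ := by linarith
  -- the key pointwise bound
  set K : ℝ := C * (2 ^ γ * ‖x‖ ^ (-γ)) with hK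
  have hK0 : 0 ≤ K := by positivity
  have hhalf : (‖x‖ / 2) ^ (-γ) = 2 ^ γ * ‖x‖ ^ (-γ) := by
    rw [Real.div_rpow (norm_nonneg x) (by norm_num), Real.rpow_neg (by norm_num : (0:ℝ) ≤ 2),
      div_eq_mul_inv, inv_inv, mul_comm]
  have key : ∀ u, W u * W (x - u) ≤ K * (W u + W (x - u)) := by
    intro u
    rcases le_or_gt (‖u‖) (‖x‖ / 2) with h | h
    · -- then ‖x - u‖ ≥ ‖x‖/2
      have h2 : ‖x‖ / 2 ≤ ‖x - u‖ := by
        have := norm_sub_norm_le x u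
        linarith [norm_sub_norm_le x u]
      have hb : W (x - u) ≤ K := by
        refine (hW _).trans ?_
        rw [hK, ← hhalf]
        gcongr C * ?_
        calc min (‖x - u‖ ^ (-γ)) 1 ≤ ‖x - u‖ ^ (-γ) := min_le_left _ _
          _ ≤ (‖x‖ / 2) ^ (-γ) :=
            Real.rpow_le_rpow_of_nonpos (by linarith) h2 (by linarith)
      calc W u * W (x - u) ≤ W u * K := by
            exact mul_le_mul_of_nonneg_left hb (hnonneg u)
        _ ≤ K * (W u + W (x - u)) := by nlinarith [hnonneg u, hnonneg (x - u), hK0]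
    · have hb : W u ≤ K := by
        refine (hW _).trans ?_
        rw [hK, ← hhalf]
        gcongr C * ?_
        calc min (‖u‖ ^ (-γ)) 1 ≤ ‖u‖ ^ (-γ) := min_le_left _ _
          _ ≤ (‖x‖ / 2) ^ (-γ) :=
            Real.rpow_le_rpow_of_nonpos (by linarith) h.le (by linarith)
      calc W u * W (x - u) ≤ K * W (x - u) :=
            mul_le_mul_of_nonneg_right hb (hnonneg (x - u))
        _ ≤ K * (W u + W (x - u)) := by nlinarith [hnonneg u, hnonneg (x - u), hK0]
  have hWx : Integrable (fun u => W (x - u)) := hWint.comp_sub_left x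
  have hsum : Integrable (fun u => K * (W u + W (x - u))) := ((hWint.add hWx).const_mul K)
  have hprod : Integrable (fun u => W u * W (x - u)) := by
    refine hsum.mono' ((hmeas.mul (hmeas.comp (measurable_const_sub x))).aestronglyMeasurable)
      (Filter.Eventually.of_forall fun u => ?_)
    rw [Real.norm_of_nonneg (mul_nonneg (hnonneg u) (hnonneg (x - u)))]
    exact key u
  calc ∫ u, W u * W (x - u) ≤ ∫ u, K * (W u + W (x - u)) :=
        integral_mono hprod hsum key
    _ = K * (I + I) := by
        rw [MeasureTheory.integral_const_mul, integral_add hWint hWx, integral_sub_left_eq_self W volume x]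
    _ ≤ C * 2 ^ γ * (2 * I + 1) * ‖x‖ ^ (-γ) := by
        rw [hK]
        have h1 : (0:ℝ) ≤ ‖x‖ ^ (-γ) := by positivity
        nlinarith [Real.rpow_pos_of_pos hxpos (-γ), hC.le, hI0,
          Real.rpow_pos_of_pos (show (0:ℝ) < 2 by norm_num) γ]
end

section
/- Let (ω_i, r_i) be a Poisson point process on ℝ^d × [1,∞) with intensity Leb × ν, ν([r,∞)) = r^{−δ}, and let γ, δ > 0 satisfy γ + δ − d > 0. There is a constant C = C(γ, δ, d) such that for all ε > 0, all R₀ > 1, and all R > C ε^{−1/(γ+δ−d)} ∨ 2R₀, P( sup_{y ∈ B(0,R₀)} Σ_{ω_j ∉ B(0,R)} r_j^{−γ} 1_{B(ω_j, r_j)}(y) > ε ) ≤ exp(−2 ε R^γ). -/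
/-!
Cut the far marks `(x, r)` into the dyadic shells `2u ≤ ‖x‖ < 4u, r ≥ u` with `u = (R/2)·2^m`:
a ball centred outside `B(0, R)` that meets `B(0, R/2)` has radius at least the `u` of its shell,
so the potential on `B(0, R/2)` is at most `∑ₘ uₘ^(-γ) N(shellₘ)`. With `w = 2^(-β)` the thresholds
`tₘ = ε (1 - w) wᵐ uₘ^γ` satisfy `∑ₘ uₘ^(-γ) tₘ = ε`, so the bad event forces some shell count to
reach its threshold. The shell intensity is `O(uₘ^(d-δ))`, and the Poisson tail
`P(N ≥ t) ≤ (eλ/⌈t⌉)^⌈t⌉` with `γ + δ - d > 0` bounds the probability of that by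
`(1 - w) wᵐ e^(-2εR^γ)`, which sums to `e^(-2εR^γ)`.
-/

open MeasureTheory ProbabilityTheory
open scoped ENNReal

def IsPoissonPP {Ω E : Type*} [MeasurableSpace Ω] [MeasurableSpace E]
    (P : Measure Ω) (N : Ω → Measure E) (μ : Measure E) : Prop :=
  (∀ A : Set E, MeasurableSet A → Measurable fun ω => N ω A) ∧
  (∀ A : Set E, MeasurableSet A → μ A < ⊤ → ∀ n : ℕ,
      P {ω | N ω A = n}
        = ENNReal.ofReal (Real.exp (-(μ A).toReal) * (μ A).toReal ^ n / n.factorial)) ∧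
  (∀ (k : ℕ) (A : Fin k → Set E), (∀ i, MeasurableSet (A i)) →
      Pairwise (Function.onFun Disjoint A) →
      iIndepFun
        (fun i ω => N ω (A i)) P)

open Set Real Metric
open scoped Nat

lemma pow_add_div_factorial_le {l : ℝ} (hl : 0 ≤ l) (n k : ℕ) :
    l ^ (n + k) / (n + k)! ≤ l ^ k / k ! * (l ^ n / n !) := by
  have hfac : (k ! * n ! : ℝ) ≤ (n + k)! := by
    exact_mod_cast Nat.le_of_dvd (Nat.factorial_pos _)
      (add_comm k n ▸ Nat.factorial_mul_factorial_dvd_factorial_add k n)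
  rw [div_mul_div_comm, pow_add, mul_comm (l ^ n)]
  gcongr

lemma pow_div_factorial_le_exp_one_mul_div_pow {l : ℝ} (hl : 0 ≤ l) (k : ℕ) :
    l ^ k / k ! ≤ (exp 1 * l / k) ^ k := by
  rcases k.eq_zero_or_pos with rfl | hk
  · simp
  have hk' : (0 : ℝ) < k := by exact_mod_cast hk
  calc l ^ k / k ! = (l / k) ^ k * ((k : ℝ) ^ k / k !) := by rw [div_pow]; field_simp
    _ ≤ (l / k) ^ k * exp k := by gcongr; exact pow_div_factorial_le_exp _ hk'.le k
    _ = (exp 1 * l / k) ^ k := by rw [← exp_one_pow]; ring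

lemma tsum_ofReal_poisson {l : ℝ} (hl : 0 ≤ l) :
    ∑' n : ℕ, ENNReal.ofReal (exp (-l) * l ^ n / n !) = 1 := by
  have h := hasSum_one_poissonMeasure l.toNNReal
  rw [Real.coe_toNNReal l hl] at h
  rw [← ENNReal.ofReal_tsum_of_nonneg (fun n => by positivity) h.summable, h.tsum_eq,
    ENNReal.ofReal_one]

namespace IsPoissonPP

variable {Ω E : Type*} [MeasurableSpace Ω] [MeasurableSpace E] {P : Measure Ω}
  [IsProbabilityMeasure P] {N : Ω → Measure E} {μ : Measure E} {A : Set E}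

lemma ae_exists_eq_natCast (h : IsPoissonPP P N μ) (hA : MeasurableSet A) (hμA : μ A < ⊤) :
    ∀ᵐ ω ∂P, ∃ n : ℕ, N ω A = n := by
  have hmeas (n : ℕ) : MeasurableSet {ω | N ω A = n} := h.1 A hA (measurableSet_singleton _)
  have hdisj : Pairwise (Function.onFun Disjoint fun n : ℕ => {ω | N ω A = n}) :=
    fun a b hab => Set.disjoint_left.2 fun ω ha hb => hab (Nat.cast_injective (ha.symm.trans hb))
  change {ω | ∃ n : ℕ, N ω A = n} ∈ ae P
  rw [ofPred_exists, mem_ae_iff_prob_eq_one (.iUnion hmeas), measure_iUnion hdisj hmeas]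
  simp_rw [h.2.1 A hA hμA]
  exact tsum_ofReal_poisson ENNReal.toReal_nonneg

lemma measure_natCast_le_count_le (h : IsPoissonPP P N μ) (hA : MeasurableSet A) (hμA : μ A < ⊤)
    (k : ℕ) : P {ω | (k : ℝ≥0∞) ≤ N ω A} ≤ ENNReal.ofReal ((μ A).toReal ^ k / k !) := by
  set l := (μ A).toReal
  have hl : 0 ≤ l := ENNReal.toReal_nonneg
  calc P {ω | (k : ℝ≥0∞) ≤ N ω A} ≤ P (⋃ n : ℕ, {ω | N ω A = (n + k : ℕ)}) := by
        refine measure_mono_ae ?_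
        filter_upwards [h.ae_exists_eq_natCast hA hμA] with ω ⟨j, hj⟩ hk
        change (k : ℝ≥0∞) ≤ N ω A at hk
        rw [hj, Nat.cast_le] at hk
        exact mem_iUnion.2 ⟨j - k, by rw [mem_ofPred_eq, hj, Nat.sub_add_cancel hk]⟩
    _ ≤ ∑' n : ℕ, ENNReal.ofReal (exp (-l) * l ^ (n + k) / (n + k)!) := by
        exact (measure_iUnion_le _).trans_eq (tsum_congr fun n => h.2.1 A hA hμA _)
    _ ≤ ∑' n : ℕ, ENNReal.ofReal (l ^ k / k !) * ENNReal.ofReal (exp (-l) * l ^ n / n !) := by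
        refine ENNReal.tsum_le_tsum fun n => ?_
        rw [← ENNReal.ofReal_mul (by positivity), mul_div_assoc, mul_div_assoc, mul_left_comm]
        gcongr
        exact pow_add_div_factorial_le hl n k
    _ = ENNReal.ofReal (l ^ k / k !) := by
        rw [ENNReal.tsum_mul_left, tsum_ofReal_poisson hl, mul_one]

lemma measure_ofReal_le_count_le_mul_exp (h : IsPoissonPP P N μ) (hA : MeasurableSet A)
    (hμA : μ A < ⊤) {c a t : ℝ} (hc₀ : 0 ≤ c) (hc₁ : c ≤ 1) (ha : 0 ≤ a) (ht : 0 < t)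
    (hmean : exp 1 * (μ A).toReal ≤ c * exp (-a) * t) :
    P {ω | ENNReal.ofReal t ≤ N ω A} ≤ ENNReal.ofReal (c * exp (-(a * t))) := by
  set l := (μ A).toReal
  set k := ⌈t⌉₊
  have hk : 1 ≤ k := Nat.one_le_iff_ne_zero.2 (Nat.ceil_pos.2 ht).ne'
  have htk : t ≤ k := Nat.le_ceil t
  calc P {ω | ENNReal.ofReal t ≤ N ω A} ≤ P {ω | (k : ℝ≥0∞) ≤ N ω A} := by
        refine measure_mono_ae ?_
        filter_upwards [h.ae_exists_eq_natCast hA hμA] with ω ⟨j, hj⟩ htj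
        change ENNReal.ofReal t ≤ N ω A at htj
        rw [hj, ENNReal.ofReal_le_natCast] at htj
        change (k : ℝ≥0∞) ≤ N ω A
        rw [hj, Nat.cast_le]
        exact Nat.ceil_le.2 htj
    _ ≤ ENNReal.ofReal (l ^ k / k !) := h.measure_natCast_le_count_le hA hμA k
    _ ≤ ENNReal.ofReal ((c * exp (-a)) ^ k) := by
        refine ENNReal.ofReal_le_ofReal ((pow_div_factorial_le_exp_one_mul_div_pow
          ENNReal.toReal_nonneg k).trans (pow_le_pow_left₀ (by positivity) ?_ k))
        rw [div_le_iff₀ (ht.trans_le htk)]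
        exact hmean.trans (by gcongr)
    _ ≤ ENNReal.ofReal (c * exp (-(a * t))) := by
        refine ENNReal.ofReal_le_ofReal ?_
        rw [mul_pow, ← exp_nat_mul]
        gcongr
        · exact pow_le_of_le_one hc₀ hc₁ (by omega)
        · nlinarith

end IsPoissonPP

lemma rpow_le_two_rpow_neg_pow_mul_rpow {ρ b x : ℝ} (hρ : 0 ≤ ρ) (hbx : b ≤ x) (m : ℕ) :
    ρ ^ x ≤ ((2 : ℝ) ^ (-b)) ^ m * (ρ * 2 ^ m) ^ x := by
  rw [mul_rpow hρ (by positivity), ← rpow_pow_comm zero_le_two, mul_left_comm, ← mul_pow,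
    ← rpow_add two_pos]
  exact le_mul_of_one_le_right (by positivity)
    (one_le_pow₀ (one_le_rpow one_le_two (by linarith)))

lemma tsum_ofReal_one_sub_mul_pow_mul {w x : ℝ} (hw₀ : 0 ≤ w) (hw₁ : w < 1) (hx : 0 ≤ x) :
    ∑' m : ℕ, ENNReal.ofReal ((1 - w) * w ^ m * x) = ENNReal.ofReal x := by
  have hsum : Summable fun m : ℕ => (1 - w) * w ^ m * x :=
    ((summable_geometric_of_lt_one hw₀ hw₁).mul_left _).mul_right _
  rw [← ENNReal.ofReal_tsum_of_nonneg (fun m => by have := sub_pos.2 hw₁; positivity) hsum,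
    tsum_mul_right, tsum_mul_left, tsum_geometric_of_lt_one hw₀ hw₁,
    mul_inv_cancel₀ (sub_pos.2 hw₁).ne', one_mul]

section Shell

variable {E : Type*} [NormedAddCommGroup E]

def shell (u : ℝ) : Set (E × ℝ) := {p | 2 * u ≤ ‖p.1‖ ∧ ‖p.1‖ < 4 * u ∧ u ≤ p.2}

noncomputable def farPotential [MeasurableSpace E] (γ R : ℝ) (y : E) (n : Measure (E × ℝ)) :
    ℝ≥0∞ :=
  ∫⁻ p, if ‖p.1‖ ≥ R ∧ dist y p.1 < p.2 then ENNReal.ofReal (p.2 ^ (-γ)) else 0 ∂n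

lemma measurableSet_shell [MeasurableSpace E] [OpensMeasurableSpace E] (u : ℝ) :
    MeasurableSet (shell u : Set (E × ℝ)) :=
  (measurableSet_le measurable_const measurable_fst.norm).inter
    ((measurableSet_lt measurable_fst.norm measurable_const).inter
      (measurableSet_le measurable_const measurable_snd))

lemma shell_subset_ball_prod_Ici (u : ℝ) : shell u ⊆ ball (0 : E) (4 * u) ×ˢ Ici u :=
  fun _ hp => ⟨mem_ball_zero_iff.2 hp.2.1, hp.2.2⟩

lemma measure_prod_shell_le [NormedSpace ℝ E] [MeasurableSpace E] [BorelSpace E]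
    [FiniteDimensional ℝ E] (μ : Measure E) [μ.IsAddHaarMeasure] (ν : Measure ℝ) {u : ℝ}
    (hu : 0 < u) :
    μ.prod ν (shell u) ≤ ENNReal.ofReal ((4 * u) ^ Module.finrank ℝ E) * μ (ball 0 1) * ν (Ici u) :=
  calc μ.prod ν (shell u) ≤ μ.prod ν (ball 0 (4 * u) ×ˢ Ici u) :=
        measure_mono (shell_subset_ball_prod_Ici u)
    _ ≤ μ (ball 0 (4 * u)) * ν (Ici u) := Measure.prod_prod_le _ _
    _ = _ := by rw [Measure.addHaar_ball_of_pos μ _ (by positivity)]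

lemma exists_mem_shell_of_dist_lt {R : ℝ} (hR : 0 < R) {y : E} (hy : ‖y‖ ≤ R / 2)
    {p : E × ℝ} (hp : R ≤ ‖p.1‖) (hyp : dist y p.1 < p.2) :
    ∃ m : ℕ, p ∈ shell (R / 2 * 2 ^ m) := by
  obtain ⟨m, hm, hm'⟩ := exists_nat_pow_near ((one_le_div hR).2 hp) one_lt_two
  rw [le_div_iff₀ hR] at hm
  rw [div_lt_iff₀ hR, pow_succ] at hm'
  have h2m : (1 : ℝ) ≤ 2 ^ m := one_le_pow₀ one_le_two
  have hdist : ‖p.1‖ - ‖y‖ ≤ dist y p.1 := by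
    rw [dist_comm, dist_eq_norm]; exact norm_sub_norm_le p.1 y
  refine ⟨m, by linarith, by linarith, ?_⟩
  nlinarith

lemma farPotential_le_tsum_shell [MeasurableSpace E] [OpensMeasurableSpace E]
    (n : Measure (E × ℝ)) {γ R : ℝ} (hγ : 0 ≤ γ) (hR : 0 < R) {y : E} (hy : ‖y‖ ≤ R / 2) :
    farPotential γ R y n
      ≤ ∑' m : ℕ, ENNReal.ofReal ((R / 2 * 2 ^ m) ^ (-γ)) * n (shell (R / 2 * 2 ^ m)) := by
  set u : ℕ → ℝ := fun m => R / 2 * 2 ^ m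
  have hpoint (p : E × ℝ) :
      (if ‖p.1‖ ≥ R ∧ dist y p.1 < p.2 then ENNReal.ofReal (p.2 ^ (-γ)) else 0)
        ≤ ∑' m, (shell (u m)).indicator (fun _ => ENNReal.ofReal (u m ^ (-γ))) p := by
    split_ifs with hp
    · obtain ⟨m, hm⟩ := exists_mem_shell_of_dist_lt hR hy hp.1 hp.2
      refine le_trans ?_ (ENNReal.le_tsum m)
      rw [indicator_of_mem hm]
      exact ENNReal.ofReal_le_ofReal
        (rpow_le_rpow_of_nonpos (by positivity) hm.2.2 (neg_nonpos.2 hγ))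
    · exact zero_le
  calc farPotential γ R y n
      ≤ ∫⁻ p, ∑' m, (shell (u m)).indicator (fun _ => ENNReal.ofReal (u m ^ (-γ))) p ∂n :=
        lintegral_mono hpoint
    _ = _ := by
        rw [lintegral_tsum fun m =>
          (measurable_const.indicator (measurableSet_shell _)).aemeasurable]
        exact tsum_congr fun m => lintegral_indicator_const (measurableSet_shell _) _

lemma farPotential_le_of_forall_shell_lt [MeasurableSpace E] [OpensMeasurableSpace E]
    {n : Measure (E × ℝ)} {γ R ε w : ℝ} (hγ : 0 ≤ γ) (hR : 0 < R) (hε : 0 ≤ ε) (hw₀ : 0 ≤ w)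
    (hw₁ : w < 1) {y : E} (hy : ‖y‖ ≤ R / 2)
    (hn : ∀ m : ℕ, n (shell (R / 2 * 2 ^ m))
      < ENNReal.ofReal (ε * (1 - w) * w ^ m * (R / 2 * 2 ^ m) ^ γ)) :
    farPotential γ R y n ≤ ENNReal.ofReal ε := by
  refine (farPotential_le_tsum_shell n hγ hR hy).trans ?_
  calc ∑' m : ℕ, ENNReal.ofReal ((R / 2 * 2 ^ m) ^ (-γ)) * n (shell (R / 2 * 2 ^ m))
      ≤ ∑' m : ℕ, ENNReal.ofReal ((1 - w) * w ^ m * ε) := by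
        refine ENNReal.tsum_le_tsum fun m => ?_
        have hu : 0 < R / 2 * 2 ^ m := by positivity
        have hcancel : (R / 2 * 2 ^ m) ^ (-γ) * (ε * (1 - w) * w ^ m * (R / 2 * 2 ^ m) ^ γ)
            = (1 - w) * w ^ m * ε := by
          have := (rpow_pos_of_pos hu γ).ne'
          rw [rpow_neg hu.le]
          field_simp
        rw [← hcancel, ENNReal.ofReal_mul (by positivity)]
        gcongr
        exact (hn m).le
    _ = ENNReal.ofReal ε := tsum_ofReal_one_sub_mul_pow_mul hw₀ hw₁ hε

end Shell

noncomputable def unitBallVolume (d : ℕ) : ℝ :=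
  (volume (ball (0 : EuclideanSpace ℝ (Fin d)) 1)).toReal

lemma unitBallVolume_pos (d : ℕ) : 0 < unitBallVolume d :=
  ENNReal.toReal_pos (measure_ball_pos volume 0 one_pos).ne' measure_ball_lt_top.ne

/-- The largeness condition on `R` is `K ≤ ε (R / 2) ^ (γ + δ - d)` with `K = farFieldConst d γ β`:
`e` comes from `k! ≥ (k / e) ^ k`, `4 ^ d |B(0, 1)|` from the volume of the shells, and
`exp (2 ^ (γ + 1) / c) / c ^ 2` with `c = 1 - 2 ^ (-β)` from the geometric weights `c 2 ^ (-β m)`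
and the target exponent `2 ε R ^ γ`. -/
noncomputable def farFieldConst (d : ℕ) (γ β : ℝ) : ℝ :=
  exp 1 * unitBallVolume d * 4 ^ d * exp (2 ^ (γ + 1) / (1 - 2 ^ (-β))) / (1 - 2 ^ (-β)) ^ 2

lemma farFieldConst_pos (d : ℕ) (γ : ℝ) {β : ℝ} (hβ : 0 < β) : 0 < farFieldConst d γ β := by
  have := unitBallVolume_pos d
  have : 0 < 1 - (2 : ℝ) ^ (-β) := sub_pos.2 (rpow_lt_one_of_one_lt_of_neg one_lt_two (by linarith))
  unfold farFieldConst
  positivity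

section FarField

variable {Ω : Type*} [MeasurableSpace Ω] {P : Measure Ω} [IsProbabilityMeasure P] {d : ℕ}
  {ν : Measure ℝ} {N : Ω → Measure (EuclideanSpace ℝ (Fin d) × ℝ)} {γ δ : ℝ}

lemma measure_ofReal_le_count_shell_le
    (hPPP : IsPoissonPP P N ((volume : Measure (EuclideanSpace ℝ (Fin d))).prod ν))
    (hν : ∀ r : ℝ, 1 ≤ r → ν (Ici r) = ENNReal.ofReal (r ^ (-δ))) {u c a t : ℝ} (hu : 1 ≤ u)
    (hc₀ : 0 ≤ c) (hc₁ : c ≤ 1) (ha : 0 ≤ a) (ht : 0 < t)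
    (hmean : exp 1 * unitBallVolume d * 4 ^ d * u ^ d * u ^ (-δ) ≤ c * exp (-a) * t) :
    P {ω | ENNReal.ofReal t ≤ N ω (shell u)} ≤ ENNReal.ofReal (c * exp (-(a * t))) := by
  set μ := (volume : Measure (EuclideanSpace ℝ (Fin d))).prod ν
  have hv := (unitBallVolume_pos d).le
  have hμ : μ (shell u) ≤ ENNReal.ofReal ((4 * u) ^ d * unitBallVolume d * u ^ (-δ)) := by
    refine (measure_prod_shell_le _ ν (by linarith)).trans_eq ?_
    rw [finrank_euclideanSpace_fin, hν u hu, ENNReal.ofReal_mul (by positivity),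
      ENNReal.ofReal_mul (by positivity), unitBallVolume,
      ENNReal.ofReal_toReal measure_ball_lt_top.ne]
  refine hPPP.measure_ofReal_le_count_le_mul_exp (measurableSet_shell u)
    (hμ.trans_lt ENNReal.ofReal_lt_top) hc₀ hc₁ ha ht (le_trans ?_ hmean)
  calc exp 1 * (μ (shell u)).toReal
      ≤ exp 1 * ((4 * u) ^ d * unitBallVolume d * u ^ (-δ)) := by
        gcongr
        exact ENNReal.toReal_le_of_le_ofReal (by positivity) hμ
    _ = _ := by ring

lemma measure_threshold_le_count_shell_le
    (hPPP : IsPoissonPP P N ((volume : Measure (EuclideanSpace ℝ (Fin d))).prod ν))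
    (hν : ∀ r : ℝ, 1 ≤ r → ν (Ici r) = ENNReal.ofReal (r ^ (-δ))) {β ε R : ℝ} (hβ : 0 < β)
    (hβγ : β ≤ γ) (hβα : 2 * β ≤ γ + δ - d) (hε : 0 < ε) (hR : 2 ≤ R)
    (hK : farFieldConst d γ β ≤ ε * (R / 2) ^ (γ + δ - d)) (m : ℕ) :
    P {ω | ENNReal.ofReal (ε * (1 - 2 ^ (-β)) * (2 ^ (-β)) ^ m * (R / 2 * 2 ^ m) ^ γ)
        ≤ N ω (shell (R / 2 * 2 ^ m))}
      ≤ ENNReal.ofReal ((1 - 2 ^ (-β)) * (2 ^ (-β)) ^ m * exp (-2 * ε * R ^ γ)) := by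
  set w : ℝ := 2 ^ (-β)
  set c := 1 - w
  set a := 2 ^ (γ + 1) / c
  set u := R / 2 * 2 ^ m
  set t := ε * c * w ^ m * u ^ γ
  have hw₀ : 0 < w := by positivity
  have hw₁ : w < 1 := rpow_lt_one_of_one_lt_of_neg one_lt_two (by linarith)
  have hc : 0 < c := sub_pos.2 hw₁
  have hu : 1 ≤ u := one_le_mul_of_one_le_of_one_le (by linarith) (one_le_pow₀ one_le_two)
  have hu₀ : 0 < u := by linarith
  have hat : 2 * ε * R ^ γ ≤ a * t := by
    have hpow := rpow_le_two_rpow_neg_pow_mul_rpow (by linarith : (0 : ℝ) ≤ R / 2) hβγ m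
    have hR2 : R ^ γ = 2 ^ γ * (R / 2) ^ γ := by
      rw [← mul_rpow zero_le_two (by linarith)]; ring_nf
    have hat' : a * t = 2 * ε * 2 ^ γ * (w ^ m * u ^ γ) := by
      simp only [a, t]; rw [rpow_add two_pos, rpow_one]; field_simp
    rw [hR2, hat', mul_assoc _ (2 ^ γ)]
    gcongr
  have hmean : exp 1 * unitBallVolume d * 4 ^ d * u ^ d * u ^ (-δ) ≤ c * w ^ m * exp (-a) * t := by
    have hpow := rpow_le_two_rpow_neg_pow_mul_rpow (by linarith : (0 : ℝ) ≤ R / 2) hβα m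
    have hw2 : ((2 : ℝ) ^ (-(2 * β))) ^ m = w ^ m * w ^ m := by
      rw [← mul_pow, ← rpow_add two_pos]; ring_nf
    have hsplit : u ^ γ = u ^ (γ + δ - d) * (u ^ d * u ^ (-δ)) := by
      rw [← rpow_natCast, ← rpow_add hu₀, ← rpow_add hu₀]; ring_nf
    calc exp 1 * unitBallVolume d * 4 ^ d * u ^ d * u ^ (-δ)
        = c ^ 2 * exp (-a) * farFieldConst d γ β * (u ^ d * u ^ (-δ)) := by
          rw [show farFieldConst d γ β = exp 1 * unitBallVolume d * 4 ^ d * exp a / c ^ 2 from rfl,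
            exp_neg]
          field_simp
      _ ≤ c ^ 2 * exp (-a) * (ε * (w ^ m * w ^ m * u ^ (γ + δ - d))) * (u ^ d * u ^ (-δ)) := by
          rw [← hw2]; gcongr; exact hK.trans (by gcongr)
      _ = c * w ^ m * exp (-a) * t := by simp only [t]; rw [hsplit]; ring
  refine (measure_ofReal_le_count_shell_le hPPP hν hu (by positivity)
    (mul_le_one₀ (by linarith) (by positivity) (pow_le_one₀ hw₀.le hw₁.le)) (by positivity)
    (by positivity) hmean).trans (ENNReal.ofReal_le_ofReal ?_)
  gcongr
  linarith

theorem measure_exists_farPotential_gt_le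
    (hPPP : IsPoissonPP P N ((volume : Measure (EuclideanSpace ℝ (Fin d))).prod ν))
    (hν : ∀ r : ℝ, 1 ≤ r → ν (Ici r) = ENNReal.ofReal (r ^ (-δ))) {β ε R : ℝ} (hβ : 0 < β)
    (hβγ : β ≤ γ) (hβα : 2 * β ≤ γ + δ - d) (hε : 0 < ε) (hR : 2 ≤ R)
    (hK : farFieldConst d γ β ≤ ε * (R / 2) ^ (γ + δ - d)) :
    P {ω | ∃ y : EuclideanSpace ℝ (Fin d), ‖y‖ ≤ R / 2 ∧
        ENNReal.ofReal ε < farPotential γ R y (N ω)}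
      ≤ ENNReal.ofReal (exp (-2 * ε * R ^ γ)) := by
  set w : ℝ := 2 ^ (-β)
  have hw₁ : w < 1 := rpow_lt_one_of_one_lt_of_neg one_lt_two (by linarith)
  set thresholdEvent := fun m : ℕ => {ω | ENNReal.ofReal (ε * (1 - w) * w ^ m * (R / 2 * 2 ^ m) ^ γ)
    ≤ N ω (shell (R / 2 * 2 ^ m))}
  have hsub : {ω | ∃ y : EuclideanSpace ℝ (Fin d), ‖y‖ ≤ R / 2 ∧
      ENNReal.ofReal ε < farPotential γ R y (N ω)} ⊆ ⋃ m, thresholdEvent m := by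
    rintro ω ⟨y, hy, hgt⟩
    by_contra hω
    simp only [thresholdEvent, mem_iUnion, mem_ofPred_eq, not_exists, not_le] at hω
    exact hgt.not_ge (farPotential_le_of_forall_shell_lt (by linarith) (by linarith) hε.le
      (by positivity) hw₁ hy hω)
  calc _ ≤ ∑' m, P (thresholdEvent m) := (measure_mono hsub).trans (measure_iUnion_le _)
    _ ≤ ∑' m, ENNReal.ofReal ((1 - w) * w ^ m * exp (-2 * ε * R ^ γ)) :=
        ENNReal.tsum_le_tsum
          (measure_threshold_le_count_shell_le hPPP hν hβ hβγ hβα hε hR hK)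
    _ = _ := tsum_ofReal_one_sub_mul_pow_mul (by positivity) hw₁ (exp_pos _).le

end FarField

lemma lt_mul_rpow_of_rpow_mul_rpow_neg_lt {K ε α ρ : ℝ} (hK : 0 ≤ K) (hε : 0 < ε) (hα : 0 < α)
    (h : K ^ (1 / α) * ε ^ (-1 / α) < ρ) : K < ε * ρ ^ α := by
  rw [neg_div, rpow_neg hε.le, ← inv_rpow hε.le, ← mul_rpow hK (inv_nonneg.2 hε.le), one_div,
    rpow_inv_lt_iff_of_pos (by positivity) ((rpow_nonneg (by positivity) _).trans h.le) hα,
    ← div_eq_mul_inv, div_lt_iff₀' hε] at h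
  exact h

theorem stmt_14_general {Ω : Type*} [MeasurableSpace Ω] (P : Measure Ω) [IsProbabilityMeasure P]
    (d : ℕ) (γ δ : ℝ) (hγ : 0 < γ) (hcrit : γ + δ - d > 0)
    (ν : Measure ℝ)
    (hν : ∀ r : ℝ, 1 ≤ r → ν (Set.Ici r) = ENNReal.ofReal (r ^ (-δ)))
    (N : Ω → Measure (EuclideanSpace ℝ (Fin d) × ℝ))
    (hPPP : IsPoissonPP P N ((volume : Measure (EuclideanSpace ℝ (Fin d))).prod ν))
    (T : ℝ → EuclideanSpace ℝ (Fin d) → Ω → ℝ≥0∞)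
    (hT : ∀ R y ω, T R y ω = ∫⁻ p : EuclideanSpace ℝ (Fin d) × ℝ,
        (if ‖p.1‖ ≥ R ∧ dist y p.1 < p.2 then ENNReal.ofReal (p.2 ^ (-γ)) else 0) ∂(N ω)) :
    ∃ C > (0:ℝ), ∀ ε > (0:ℝ), ∀ R₀ > (1:ℝ), ∀ R : ℝ,
      R > max (C * ε ^ (-1 / (γ + δ - d))) (2 * R₀) →
      P {ω | ∃ y : EuclideanSpace ℝ (Fin d), ‖y‖ < R₀ ∧ T R y ω > ENNReal.ofReal ε}
        ≤ ENNReal.ofReal (Real.exp (-2 * ε * R ^ γ)) := by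
  set α := γ + δ - d
  set β := min α γ / 2
  have hβ : 0 < β := half_pos (lt_min hcrit hγ)
  have hβγ : β ≤ γ := (half_le_self (lt_min hcrit hγ).le).trans (min_le_right _ _)
  have hβα : 2 * β ≤ α := by rw [mul_div_cancel₀ _ two_ne_zero]; exact min_le_left _ _
  have hK := farFieldConst_pos d γ hβ
  refine ⟨2 * farFieldConst d γ β ^ (1 / α), by positivity, fun ε hε R₀ hR₀ R hR => ?_⟩
  rw [gt_iff_lt, max_lt_iff] at hR
  have hKR : farFieldConst d γ β ≤ ε * (R / 2) ^ α :=
    (lt_mul_rpow_of_rpow_mul_rpow_neg_lt hK.le hε hcrit (by linarith)).le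
  calc _ ≤ P {ω | ∃ y : EuclideanSpace ℝ (Fin d), ‖y‖ ≤ R / 2 ∧
        ENNReal.ofReal ε < farPotential γ R y (N ω)} :=
        measure_mono (by rintro ω ⟨y, hy, hTy⟩; exact ⟨y, by linarith, by rwa [hT] at hTy⟩)
    _ ≤ _ := measure_exists_farPotential_gt_le hPPP hν hβ hβγ hβα hε (by linarith) hKR

/-- Weak independence (decorrelation) estimate for Lacoin's potential: the
contribution at points of `B(0,R₀)` from balls centered outside `B(0,R)` has an
exponentially small probability of exceeding `ε`. -/
theorem stmt_14 {Ω : Type*} [MeasurableSpace Ω] (P : Measure Ω) [IsProbabilityMeasure P]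
    (d : ℕ) (hd : 1 ≤ d) (γ δ : ℝ) (hγ : 0 < γ) (hδ : 0 < δ) (hcrit : γ + δ - d > 0)
    (ν : Measure ℝ)
    (hν : ∀ r : ℝ, 1 ≤ r → ν (Set.Ici r) = ENNReal.ofReal (r ^ (-δ)))
    (hν' : ν (Set.Iio 1) = 0)
    (N : Ω → Measure (EuclideanSpace ℝ (Fin d) × ℝ))
    (hPPP : IsPoissonPP P N ((volume : Measure (EuclideanSpace ℝ (Fin d))).prod ν))
    (T : ℝ → EuclideanSpace ℝ (Fin d) → Ω → ℝ≥0∞)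
    (hT : ∀ R y ω, T R y ω = ∫⁻ p : EuclideanSpace ℝ (Fin d) × ℝ,
        (if ‖p.1‖ ≥ R ∧ dist y p.1 < p.2 then ENNReal.ofReal (p.2 ^ (-γ)) else 0) ∂(N ω)) :
    ∃ C > (0:ℝ), ∀ ε > (0:ℝ), ∀ R₀ > (1:ℝ), ∀ R : ℝ,
      R > max (C * ε ^ (-1 / (γ + δ - d))) (2 * R₀) →
      P {ω | ∃ y : EuclideanSpace ℝ (Fin d), ‖y‖ < R₀ ∧ T R y ω > ENNReal.ofReal ε}
        ≤ ENNReal.ofReal (Real.exp (-2 * ε * R ^ γ)) :=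
  stmt_14_general P d γ δ hγ hcrit ν hν N hPPP T hT
end
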